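/- arXiv:1509.01675 — 6 statements merged into one kernel-verified Lean document; each statement's English description precedes it below -/
import Mathlib

section
/- Let D be a connected rooted digraph, let v ≠ r be a vertex of D, and let D' be the digraph obtained from D by duplicating v. Then |sp(D')| ≥ |sp(D)| and maxleaf(D) ≥ maxleaf(D') − 1. -/
namespace OutBranching

variable {V : Type}

/-! ### Basic digraph notions -/

/-- `b` is reachable from `a` by a directed path. -/
def Reaches (E : V → V → Prop) (a b : V) : Prop := Relation.ReflTransGen E a b

/-- The rooted digraph `(E, r)` is connected: every vertex is reachable from the root. -/
def Connected (E : V → V → Prop) (r : V) : Prop := ∀ v, Reaches E r v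

/-- `b` is reachable from `a` by a directed path avoiding the vertex set `S`. -/
def ReachAvoid (E : V → V → Prop) (S : Set V) (a b : V) : Prop :=
  a ∉ S ∧ b ∉ S ∧ Relation.ReflTransGen (fun x y => E x y ∧ x ∉ S ∧ y ∉ S) a b

/-- A cut-vertex: a vertex `v ≠ r` whose removal makes some (other) vertex unreachable
from the root `r`. -/
def IsCutVertex (E : V → V → Prop) (r v : V) : Prop :=
  v ≠ r ∧ ∃ u, u ≠ v ∧ ¬ ReachAvoid E {v} r u

/-- The set of cut-vertices. -/
def cutVertices (E : V → V → Prop) (r : V) : Set V := {v | IsCutVertex E r v}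

/-- The edge relation obtained by deleting the single edge `(u,v)`. -/
def delEdge (E : V → V → Prop) (u v : V) : V → V → Prop :=
  fun a b => E a b ∧ ¬ (a = u ∧ b = v)

/-- A cut-edge: an edge `(u,v)` whose deletion makes some vertex unreachable from `r`. -/
def IsCutEdge (E : V → V → Prop) (r u v : V) : Prop :=
  E u v ∧ ∃ w, ¬ Reaches (delEdge E u v) r w

/-- A lonely cut-edge: no other cut-edge has the same tail. -/
def IsLonelyCutEdge (E : V → V → Prop) (r u v : V) : Prop :=
  IsCutEdge E r u v ∧ ∀ w, IsCutEdge E r u w → w = v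

/-- A branching cut-edge: some other cut-edge has the same tail. -/
def IsBranchingCutEdge (E : V → V → Prop) (r u v : V) : Prop :=
  IsCutEdge E r u v ∧ ∃ w, w ≠ v ∧ IsCutEdge E r u w

/-- In-neighbourhood. -/
def inN (E : V → V → Prop) (v : V) : Set V := {u | E u v}

/-- Out-neighbourhood. -/
def outN (E : V → V → Prop) (v : V) : Set V := {w | E v w}

/-- Private neighbors of `u`: out-neighbors of `u` not reachable from `r` in `D - u`. -/
def privateNbrs (E : V → V → Prop) (r u : V) : Set V :=
  {v | E u v ∧ ¬ ReachAvoid E {u} r v}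

/-- A special vertex: in-degree at least 3, or an incoming simple edge. -/
def Special (E : V → V → Prop) (v : V) : Prop :=
  3 ≤ (inN E v).ncard ∨ ∃ u, E u v ∧ ¬ E v u

/-- The set of special vertices. -/
def sp (E : V → V → Prop) : Set V := {v | Special E v}

/-! ### Outbranchings and `maxleaf` -/

/-- `T` is an outbranching of `(E, r)`: a spanning subdigraph in which every vertex is
reachable from `r`, every vertex other than `r` has in-degree exactly 1,
and `r` has in-degree 0. -/
structure IsOutbranching (E : V → V → Prop) (r : V) (T : V → V → Prop) : Prop where
  sub : ∀ ⦃a b⦄, T a b → E a b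
  reach : ∀ v, Reaches T r v
  indeg : ∀ v, v ≠ r → ∃! u, T u v
  rootIndeg : ∀ u, ¬ T u r

/-- The number of leaves (vertices of out-degree 0) of `T`. -/
noncomputable def leafCount (T : V → V → Prop) : ℕ := {v | ∀ w, ¬ T v w}.ncard

/-- The maximum number of leaves over all outbranchings of `(E, r)`. -/
noncomputable def maxleaf (E : V → V → Prop) (r : V) : ℕ :=
  sSup {n | ∃ T, IsOutbranching E r T ∧ leafCount T = n}

/-! ### The reduction rules (each `RuleᵢNA` says that rule i does NOT apply) -/

/-- Rule 1 does not apply: every vertex is reachable from the root. -/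
def Rule1NA (E : V → V → Prop) (r : V) : Prop := Connected E r

/-- Rule 2 does not apply: no cut-vertex has exactly one incoming edge,
and no cut-vertex has exactly one outgoing edge. -/
def Rule2NA (E : V → V → Prop) (r : V) : Prop :=
  ∀ v, IsCutVertex E r v → ¬ (∃! u, E u v) ∧ ¬ (∃! w, E v w)

/-- Rule 3 does not apply: there is no proper bipath of length 4, i.e. no sequence
of 5 distinct vertices `a b c d e` whose three internal vertices have their in- and
out-neighbourhoods equal to the pair of adjacent vertices on the sequence. -/
def Rule3NA (E : V → V → Prop) : Prop :=
  ¬ ∃ a b c d e : V, List.Pairwise (· ≠ ·) [a, b, c, d, e] ∧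
    (∀ w, (E w b ↔ w = a ∨ w = c) ∧ (E b w ↔ w = a ∨ w = c)) ∧
    (∀ w, (E w c ↔ w = b ∨ w = d) ∧ (E c w ↔ w = b ∨ w = d)) ∧
    (∀ w, (E w d ↔ w = c ∨ w = e) ∧ (E d w ↔ w = c ∨ w = e))

/-- Rule 4 does not apply: there is no vertex `x` with an in-neighbor `y` such that
removing all in-neighbors of `x` other than `y` disconnects `y` from `r`. -/
def Rule4NA (E : V → V → Prop) (r : V) : Prop :=
  ¬ ∃ x y, E y x ∧ ¬ ReachAvoid E {v | E v x ∧ v ≠ y} r y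

/-- Rule 5 does not apply: there are no two cut-edges `(x₁,y₁)`, `(x₂,y₂)` with both
`(x₁,x₂)` and `(x₂,x₁)` being edges. -/
def Rule5NA (E : V → V → Prop) (r : V) : Prop :=
  ¬ ∃ x₁ y₁ x₂ y₂, IsCutEdge E r x₁ y₁ ∧ IsCutEdge E r x₂ y₂ ∧ E x₁ x₂ ∧ E x₂ x₁

/-- Rule 6 does not apply: there is no cut-edge `(u,v)` with `(v,u)` an edge. -/
def Rule6NA (E : V → V → Prop) (r : V) : Prop :=
  ¬ ∃ u v, IsCutEdge E r u v ∧ E v u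

/-- Reduction rules R1–R4 do not apply. -/
def Reduced4 (E : V → V → Prop) (r : V) : Prop :=
  Rule1NA E r ∧ Rule2NA E r ∧ Rule3NA E ∧ Rule4NA E r

/-- Reduction rules R1–R6 do not apply. -/
def Reduced6 (E : V → V → Prop) (r : V) : Prop :=
  Reduced4 E r ∧ Rule5NA E r ∧ Rule6NA E r

/-! ### Contraction -/

/-- The setoid on `V` generated by identifying the endpoints of the edges in `C`. -/
def contractSetoid (C : V → V → Prop) : Setoid V := Relation.EqvGen.setoid C

/-- Vertices of the digraph obtained by contracting all edges in `C`. -/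
def CVert (C : V → V → Prop) : Type := Quotient (contractSetoid C)

/-- The projection of a vertex to the contracted digraph. -/
def cmk (C : V → V → Prop) (x : V) : CVert C := Quotient.mk (contractSetoid C) x

/-- The edge relation of the digraph obtained from `E` by contracting all edges in `C`
(loops and parallel edges are discarded). -/
def contractE (E : V → V → Prop) (C : V → V → Prop) : CVert C → CVert C → Prop :=
  fun a b => a ≠ b ∧ ∃ x y, cmk C x = a ∧ cmk C y = b ∧ E x y

/-- The relation consisting of a single edge `(u,v)` (used for contracting one edge). -/
def singleEdge (u v : V) : V → V → Prop := fun a b => a = u ∧ b = v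

/-- The relation of lonely cut-edges. -/
def lonelyRel (E : V → V → Prop) (r : V) : V → V → Prop :=
  fun u v => IsLonelyCutEdge E r u v

/-- Vertices of the contracted graph `D_c`, obtained by contracting all lonely cut-edges. -/
def ContractedVert (E : V → V → Prop) (r : V) : Type := CVert (lonelyRel E r)

/-- The edge relation of the contracted graph `D_c`. -/
def contractedE (E : V → V → Prop) (r : V) : ContractedVert E r → ContractedVert E r → Prop :=
  contractE E (lonelyRel E r)

/-- The root of the contracted graph `D_c`. -/
def contractedRoot (E : V → V → Prop) (r : V) : ContractedVert E r := cmk (lonelyRel E r) r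

/-- The bag of a vertex of `D_c`: the set of original vertices contracted into it. -/
def bag (E : V → V → Prop) (r : V) (a : ContractedVert E r) : Set V :=
  {x | cmk (lonelyRel E r) x = a}

/-- `t` is a tail of the bag `B`: it is the tail of a contracted (lonely) cut-edge inside `B`,
or `B` is the singleton `{t}`. -/
def IsTailOf (E : V → V → Prop) (r : V) (B : Set V) (t : V) : Prop :=
  t ∈ B ∧ (B = {t} ∨ ∃ h ∈ B, IsLonelyCutEdge E r t h)

/-- `h` is a head of the bag `B`: it is the head of a contracted (lonely) cut-edge inside `B`,
or `B` is the singleton `{h}`. -/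
def IsHeadOf (E : V → V → Prop) (r : V) (B : Set V) (h : V) : Prop :=
  h ∈ B ∧ (B = {h} ∨ ∃ t ∈ B, IsLonelyCutEdge E r t h)

/-- Two bags are linked if there is an edge of `D` in each direction between them. -/
def LinkedBags (E : V → V → Prop) (A B : Set V) : Prop :=
  (∃ x ∈ A, ∃ y ∈ B, E x y) ∧ (∃ x ∈ B, ∃ y ∈ A, E x y)

/-! ### Duplication of a vertex -/

/-- Duplicating the vertex `v`: the new vertex is `none`, receiving/sending edges exactly
as `v` does. -/
def dupE (E : V → V → Prop) (v : V) : Option V → Option V → Prop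
  | some a, some b => E a b
  | some a, none => E a v
  | none, some b => E v b
  | none, none => False

/-! ### Undirected notions: underlying graph, minors -/

/-- The underlying undirected simple graph of a digraph. -/
def underlying (E : V → V → Prop) : SimpleGraph V where
  Adj a b := a ≠ b ∧ (E a b ∨ E b a)
  symm := ⟨fun a b h => ⟨Ne.symm h.1, h.2.symm⟩⟩
  loopless := ⟨fun a h => h.1 rfl⟩

/-- `H` is a minor of `G`: there is a minor model of `H` in `G`. -/
def IsMinorOf {W U : Type} (H : SimpleGraph W) (G : SimpleGraph U) : Prop :=
  ∃ I : W → Set U,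
    (∀ u, (G.induce (I u)).Connected) ∧
    (Pairwise fun u v => Disjoint (I u) (I v)) ∧
    (∀ u v, H.Adj u v → ∃ x ∈ I u, ∃ y ∈ I v, G.Adj x y)

/-- `G` is `H`-minor-free. -/
def MinorFree {W U : Type} (H : SimpleGraph W) (G : SimpleGraph U) : Prop := ¬ IsMinorOf H G

/-! ### Weak bipaths -/

/-- A weak bipath in a digraph: a sequence of at least 3 distinct vertices whose internal
vertices have in-neighbourhood exactly the two adjacent vertices of the sequence, both
of which are also out-neighbours. -/
structure WeakBipath {W : Type} (E : W → W → Prop) where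
  len : ℕ
  u : Fin (len + 3) → W
  inj : Function.Injective u
  cond : ∀ i j k : Fin (len + 3), j.val + 1 = i.val → i.val + 1 = k.val →
    (∀ w, E w (u i) ↔ (w = u j ∨ w = u k)) ∧ E (u i) (u j) ∧ E (u i) (u k)

/-- The set of internal vertices of a weak bipath. -/
def WeakBipath.internal {W : Type} {E : W → W → Prop} (P : WeakBipath E) : Set W :=
  {w | ∃ i : Fin (P.len + 3), 0 < i.val ∧ i.val < P.len + 2 ∧ P.u i = w}

/-- The first extremity of a weak bipath. -/
def WeakBipath.first {W : Type} {E : W → W → Prop} (P : WeakBipath E) : W := P.u 0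

/-- The last extremity of a weak bipath. -/
def WeakBipath.last {W : Type} {E : W → W → Prop} (P : WeakBipath E) : W :=
  P.u (Fin.last (P.len + 2))

/-!
Special vertices of `D` stay special in `D'`, since duplication only adds edges around them.

For the leaf bound, merge `v` with its copy: an outbranching `T'` of `D'` is mapped onto a
spanning subdigraph `H` of `D` in which every vertex is still reachable from `r`. A leaf of `T'`
other than `v` and its copy becomes a sink of `H`, and so does `v` when both `v` and its copy are
leaves. Any outbranching contained in `H` keeps these sinks as leaves, and one exists: as long as
some vertex `w` has two in-edges, the in-edge along which a path from `r` first enters `w` keeps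
`w` reachable, so another in-edge of `w` can be deleted.
-/

theorem special_dupE_some [Finite V] {E : V → V → Prop} {u : V} (v : V) (hu : Special E u) :
    Special (dupE E v) (some u) := by
  rcases hu with hdeg | ⟨w, hwu, hnuw⟩
  · left
    calc 3 ≤ (inN E u).ncard := hdeg
      _ = (some '' inN E u).ncard :=
          (Set.ncard_image_of_injective _ (Option.some_injective V)).symm
      _ ≤ (inN (dupE E v) (some u)).ncard :=
          Set.ncard_le_ncard (by rintro _ ⟨w, hw, rfl⟩; exact hw)
  · exact Or.inr ⟨some w, hwu, hnuw⟩

theorem ncard_sp_le_ncard_sp_dupE [Finite V] (E : V → V → Prop) (v : V) :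
    (sp E).ncard ≤ (sp (dupE E v)).ncard :=
  calc (sp E).ncard = (some '' sp E).ncard :=
        (Set.ncard_image_of_injective _ (Option.some_injective V)).symm
    _ ≤ (sp (dupE E v)).ncard :=
        Set.ncard_le_ncard (by rintro _ ⟨u, hu, rfl⟩; exact special_dupE_some v hu)

theorem IsOutbranching.mono {E H T : V → V → Prop} {r : V} (hT : IsOutbranching H r T)
    (hHE : H ≤ E) : IsOutbranching E r T :=
  ⟨fun a b h => hHE a b (hT.sub h), hT.reach, hT.indeg, hT.rootIndeg⟩

theorem Reaches.exists_first_entry {H : V → V → Prop} {r v : V}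
    (h : Reaches H r v) (hvr : v ≠ r) :
    ∃ c, Reaches (fun x y => H x y ∧ y ≠ v) r c ∧ H c v := by
  induction h using Relation.ReflTransGen.head_induction_on with
  | refl => exact absurd rfl hvr
  | @head a x hax _ ih =>
    by_cases hxv : x = v
    · exact ⟨a, .refl, hxv ▸ hax⟩
    · obtain ⟨c, hxc, hcv⟩ := ih (Ne.symm hxv)
      exact ⟨c, .head ⟨hax, hxv⟩ hxc, hcv⟩

theorem reaches_delEdge {H : V → V → Prop} {r b c v w : V}
    (hrc : Reaches (fun x y => H x y ∧ y ≠ v) r c) (hcv : H c v) (hbc : b ≠ c)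
    (hw : Reaches H r w) : Reaches (delEdge H b v) r w := by
  have hrv : Reaches (delEdge H b v) r v :=
    (Relation.ReflTransGen.mono (p := delEdge H b v)
      (fun _ _ h => ⟨h.1, fun h' => h.2 h'.2⟩) _ _ hrc).tail ⟨hcv, fun h' => hbc h'.1.symm⟩
  induction hw with
  | refl => exact .refl
  | @tail x y _ hxy ih =>
    by_cases hbv : x = b ∧ y = v
    · exact hbv.2 ▸ hrv
    · exact ih.tail ⟨hxy, hbv⟩

theorem exists_isOutbranching [Finite V] {H : V → V → Prop} {r : V}
    (hreach : ∀ w, Reaches H r w) (hroot : ∀ u, ¬ H u r) : ∃ T, IsOutbranching H r T := by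
  induction H using WellFoundedLT.induction with | _ H ih => ?_
  by_cases hindeg : ∀ w, w ≠ r → ∃! u, H u w
  · exact ⟨H, fun _ _ h => h, hreach, hindeg, hroot⟩
  push Not at hindeg
  obtain ⟨w, hwr, hnuniq⟩ := hindeg
  obtain ⟨c, hrc, hcw⟩ := (hreach w).exists_first_entry hwr
  obtain ⟨b, hbw, hbc⟩ : ∃ b, H b w ∧ b ≠ c := by
    by_contra! h
    exact hnuniq ⟨c, hcw, h⟩
  have hlt : delEdge H b w < H :=
    lt_of_le_not_ge (fun _ _ h => h.1) fun hle => (hle b w hbw).2 ⟨rfl, rfl⟩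
  obtain ⟨T, hT⟩ := ih _ hlt (fun x => reaches_delEdge hrc hcw hbc (hreach x))
    (fun u h => hroot u h.1)
  exact ⟨T, hT.mono fun _ _ h => h.1⟩

theorem leafCount_le_maxleaf [Finite V] {E T : V → V → Prop} {r : V}
    (hT : IsOutbranching E r T) : leafCount T ≤ maxleaf E r :=
  le_csSup ⟨Nat.card V, by rintro _ ⟨S, -, rfl⟩; exact Set.ncard_le_card _⟩ ⟨T, hT, rfl⟩

theorem dupE_getD {E : V → V → Prop} {v : V} {x y : Option V} (h : dupE E v x y) :
    E (x.getD v) (y.getD v) := by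
  cases x <;> cases y
  exacts [h.elim, h, h, h]

theorem ncard_option_le_ncard_add_one [Finite V] {v : V} {L' : Set (Option V)} {L : Set V}
    (hsome : ∀ a, a ≠ v → some a ∈ L' → a ∈ L) (hboth : some v ∈ L' → none ∈ L' → v ∈ L) :
    L'.ncard ≤ L.ncard + 1 := by
  by_cases hnone : none ∈ L'
  · have hsub : L' ⊆ insert none (some '' L) := by
      rintro (_ | a) ha
      · exact Set.mem_insert _ _
      · refine Set.mem_insert_of_mem _ ⟨a, ?_, rfl⟩
        by_cases hav : a = v
        · exact hav ▸ hboth (hav ▸ ha) hnone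
        · exact hsome a hav ha
    calc L'.ncard ≤ (insert none (some '' L)).ncard := Set.ncard_le_ncard hsub
      _ ≤ (some '' L).ncard + 1 := Set.ncard_insert_le _ _
      _ = L.ncard + 1 := by rw [Set.ncard_image_of_injective _ (Option.some_injective V)]
  · have hsub : L' ⊆ some '' insert v L := by
      rintro (_ | a) ha
      · exact absurd ha hnone
      · refine ⟨a, ?_, rfl⟩
        by_cases hav : a = v
        · exact hav ▸ Set.mem_insert v L
        · exact Set.mem_insert_of_mem _ (hsome a hav ha)
    calc L'.ncard ≤ (some '' insert v L).ncard := Set.ncard_le_ncard hsub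
      _ = (insert v L).ncard := Set.ncard_image_of_injective _ (Option.some_injective V)
      _ ≤ L.ncard + 1 := Set.ncard_insert_le _ _

theorem exists_isOutbranching_leafCount_le [Finite V] {E : V → V → Prop} {r v : V}
    {T' : Option V → Option V → Prop} (hT' : IsOutbranching (dupE E v) (some r) T')
    (hv : v ≠ r) : ∃ T, IsOutbranching E r T ∧ leafCount T' ≤ leafCount T + 1 := by
  set H := Relation.Map T' (·.getD v) (·.getD v)
  have hreach : ∀ w, Reaches H r w := fun w =>
    Relation.ReflTransGen.lift (p := H) (fun x : Option V => x.getD v)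
      (fun x y h => ⟨x, y, h, rfl, rfl⟩) _ _ (hT'.reach (some w))
  have hroot : ∀ u, ¬ H u r := by
    rintro _ ⟨x, (_ | y), hxy, -, hy⟩
    · exact hv hy
    · exact hT'.rootIndeg x ((show y = r from hy) ▸ hxy)
  obtain ⟨T, hT⟩ := exists_isOutbranching hreach hroot
  have hleaf : ∀ a, (∀ x, x.getD v = a → ∀ y, ¬ T' x y) → ∀ w, ¬ T a w := by
    rintro a ha w hw
    obtain ⟨x, y, hxy, hx, -⟩ := hT.sub hw
    exact ha x hx y hxy
  refine ⟨T, hT.mono fun a b ⟨x, y, hxy, hx, hy⟩ => hx ▸ hy ▸ dupE_getD (hT'.sub hxy), ?_⟩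
  refine ncard_option_le_ncard_add_one (v := v) (fun a hav ha => hleaf a ?_)
    fun hv' hnone => hleaf v ?_
  · rintro (_ | x) hx
    · exact absurd hx.symm hav
    · exact (show x = a from hx) ▸ ha
  · rintro (_ | x) hx
    · exact hnone
    · exact (show x = v from hx) ▸ hv'

theorem maxleaf_dupE_le [Finite V] {E : V → V → Prop} {r v : V} (hv : v ≠ r) :
    maxleaf (dupE E v) (some r) ≤ maxleaf E r + 1 := by
  refine csSup_le' ?_
  rintro _ ⟨T', hT', rfl⟩
  obtain ⟨T, hT, hle⟩ := exists_isOutbranching_leafCount_le hT' hv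
  exact hle.trans (Nat.add_le_add_right (leafCount_le_maxleaf hT) 1)

theorem duplicate_vertex_general {V : Type} [Fintype V] (E : V → V → Prop) (r v : V)
    (hv : v ≠ r) :
    (sp E).ncard ≤ (sp (dupE E v)).ncard ∧
      maxleaf (dupE E v) (some r) ≤ maxleaf E r + 1 :=
  ⟨ncard_sp_le_ncard_sp_dupE E v, maxleaf_dupE_le hv⟩

/-- Duplicating a vertex `v ≠ r` of a connected rooted digraph does not
decrease the number of special vertices, and `maxleaf(D) ≥ maxleaf(D') − 1`. -/
theorem duplicate_vertex {V : Type} [Fintype V] (E : V → V → Prop) (r v : V)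
    (hroot : ∀ u, ¬ E u r) (hconn : Connected E r) (hv : v ≠ r) :
    (sp E).ncard ≤ (sp (dupE E v)).ncard ∧
      maxleaf (dupE E v) (some r) ≤ maxleaf E r + 1 :=
  duplicate_vertex_general E r v hv

end OutBranching
end

section
/- Let D be a connected rooted digraph to which reduction rules R1–R4 do not apply, and let u be a cut-vertex of D or u = r. Then every private neighbor v ∈ P(u) has in-degree 1 in D, and (u,v) is a cut-edge. In particular, the head of every cut-edge of D has in-degree 1. -/
namespace OutBranching

variable {V : Type}

/-!
If `y` had an in-neighbour `w` besides `x`, R4 applied to the edge `(w, y)` would give a path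
from `r` to `w` avoiding `x`; extended by `(w, y)` it reaches `y` without passing through `x`,
hence without using the edge `(x, y)`. Private neighbours of `x`, and heads of cut-edges of a
connected digraph, cannot be reached in this way.
-/

section

variable {E : V → V → Prop} {r : V}

theorem Rule4NA.reachAvoid (h4 : Rule4NA E r) {x y : V} (hyx : E y x) :
    ReachAvoid E {v | E v x ∧ v ≠ y} r y :=
  not_not.mp fun h => h4 ⟨x, y, hyx, h⟩

theorem Rule4NA.irrefl (h4 : Rule4NA E r) (hroot : ∀ u, ¬ E u r) (v : V) : ¬ E v v := by
  intro hvv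
  obtain ⟨-, -, hpath⟩ := h4.reachAvoid hvv
  -- The only in-neighbour of `v` left on the path is `v` itself, so the path never enters `v`.
  have hne : ∀ z, Relation.ReflTransGen
      (fun a b => E a b ∧ a ∉ {w | E w v ∧ w ≠ v} ∧ b ∉ {w | E w v ∧ w ≠ v}) r z → z ≠ v := by
    intro z hz
    induction hz with
    | refl => exact fun hrv => hroot v (hrv ▸ hvv)
    | tail _ hab ih =>
      rintro rfl
      exact ih (not_not.mp fun hne => hab.2.1 ⟨hab.1, hne⟩)
  exact hne v hpath rfl

theorem Rule4NA.eq_of_not_reachAvoid (h4 : Rule4NA E r) (hroot : ∀ u, ¬ E u r) {x y : V}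
    (hxy : E x y) (hy : ¬ ReachAvoid E {x} r y) (w : V) (hwy : E w y) : w = x := by
  by_contra hwx
  have hxS : x ∈ {v | E v y ∧ v ≠ w} := ⟨hxy, Ne.symm hwx⟩
  obtain ⟨hrS, -, hpath⟩ := h4.reachAvoid hwy
  have hyx : y ≠ x := fun h => h4.irrefl hroot x (h ▸ hxy)
  refine hy ⟨fun h => hrS (h ▸ hxS), hyx, ?_⟩
  refine (Relation.ReflTransGen.mono ?_ _ _ hpath).tail ⟨hwy, hwx, hyx⟩
  rintro a b ⟨hab, haS, hbS⟩
  exact ⟨hab, fun h => haS (h ▸ hxS), fun h => hbS (h ▸ hxS)⟩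

theorem ReachAvoid.reaches_delEdge {x a b : V} (h : ReachAvoid E {x} a b) (y : V) :
    Reaches (delEdge E x y) a b :=
  Relation.ReflTransGen.mono (fun _ _ ⟨hab, hax, _⟩ => ⟨hab, fun h => hax h.1⟩) _ _ h.2.2

theorem IsCutEdge.not_reaches_head (hconn : Connected E r) {x y : V} (hxy : IsCutEdge E r x y) :
    ¬ Reaches (delEdge E x y) r y := by
  obtain ⟨-, w, hw⟩ := hxy
  intro hy
  suffices ∀ z, Reaches E r z → Reaches (delEdge E x y) r z from hw (this w (hconn w))
  intro z hz
  induction hz with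
  | refl => exact .refl
  | @tail a b _ hab ih =>
    by_cases he : a = x ∧ b = y
    · exact he.2 ▸ hy
    · exact ih.tail ⟨hab, he⟩

theorem not_reaches_delEdge_of_forall_eq {x y : V} (hin : ∀ w, E w y → w = x) (hyr : y ≠ r) :
    ¬ Reaches (delEdge E x y) r y := by
  intro hy
  obtain hry | ⟨w, -, hwy, hne⟩ := hy.cases_tail
  · exact hyr hry
  · exact hne ⟨hin w hwy, rfl⟩

end

theorem private_neighbors_indegree_one_general {V : Type} (E : V → V → Prop) (r : V)
    (hroot : ∀ u, ¬ E u r) (hred : Reduced4 E r) (u : V) :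
    (∀ v ∈ privateNbrs E r u, (∃! w, E w v) ∧ IsCutEdge E r u v) ∧
      (∀ x y, IsCutEdge E r x y → ∃! w, E w y) := by
  obtain ⟨hconn, -, -, h4⟩ := hred
  refine ⟨fun v ⟨huv, hv⟩ => ?_, fun x y hxy => ?_⟩
  · have hin := h4.eq_of_not_reachAvoid hroot huv hv
    have hvr : v ≠ r := fun h => hroot u (h ▸ huv)
    exact ⟨⟨u, huv, hin⟩, huv, v, not_reaches_delEdge_of_forall_eq hin hvr⟩
  · refine ⟨x, hxy.1, h4.eq_of_not_reachAvoid hroot hxy.1 fun hy => ?_⟩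
    exact hxy.not_reaches_head hconn (hy.reaches_delEdge y)

/-- If reduction rules R1–R4 do not apply to the connected rooted digraph
`D` and `u` is a cut-vertex or the root, then every private neighbor `v ∈ P(u)` has
in-degree 1 and `(u,v)` is a cut-edge; in particular the head of every cut-edge has
in-degree 1. -/
theorem private_neighbors_indegree_one {V : Type} [Fintype V] (E : V → V → Prop) (r : V)
    (hroot : ∀ u, ¬ E u r) (hred : Reduced4 E r) (u : V)
    (hu : IsCutVertex E r u ∨ u = r) :
    (∀ v ∈ privateNbrs E r u, (∃! w, E w v) ∧ IsCutEdge E r u v) ∧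
      (∀ x y, IsCutEdge E r x y → ∃! w, E w y) :=
  private_neighbors_indegree_one_general E r hroot hred u

end OutBranching
end

section
/- Let D be a connected rooted digraph and let u ≠ r be a vertex that is not the head of any cut-edge. Then there exist two simple directed paths P_1, P_2 from r to u whose final edges are distinct, i.e., P_1 ends with an edge (a_1,u) and P_2 ends with an edge (a_2,u) where a_1 ≠ a_2. -/
namespace Relation.ReflTransGen

variable {α : Type*} {R : α → α → Prop} {a b : α}

theorem exists_nodup_isChain_cons (h : ReflTransGen R a b) :
    ∃ l, (a :: l).IsChain R ∧ (a :: l).getLast (List.cons_ne_nil _ _) = b ∧ (a :: l).Nodup := by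
  induction h using Relation.ReflTransGen.head_induction_on with
  | refl => exact ⟨[], .singleton _, rfl, List.nodup_singleton _⟩
  | @head a c hac _ ih =>
    obtain ⟨l, hchain, hlast, hnodup⟩ := ih
    by_cases ha : a ∈ c :: l
    · obtain ⟨s, t, hst⟩ := List.append_of_mem ha
      have hsuffix : a :: t <:+ c :: l := ⟨s, hst.symm⟩
      refine ⟨t, hchain.suffix hsuffix, ?_, hnodup.sublist hsuffix.sublist⟩
      simpa only [hst, List.getLast_append_of_ne_nil _ (List.cons_ne_nil a t)] using hlast
    · exact ⟨c :: l, .cons_cons hac hchain, by rwa [List.getLast_cons_cons],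
        List.nodup_cons.2 ⟨ha, hnodup⟩⟩

theorem exists_nodup_isChain_last_edge (h : ReflTransGen R a b) (hab : a ≠ b) :
    ∃ l c, R c b ∧ (l ++ [c, b]).head? = some a ∧ (l ++ [c, b]).IsChain R ∧
      (l ++ [c, b]).Nodup := by
  obtain ⟨l, hchain, hlast, hnodup⟩ := h.exists_nodup_isChain_cons
  obtain rfl | ⟨l', x, rfl⟩ := l.eq_nil_or_concat
  · exact absurd hlast hab
  have hx : x = b := by simpa using hlast
  subst x
  obtain ⟨l₀, c, hc⟩ := (a :: l').eq_nil_or_concat.resolve_left (List.cons_ne_nil _ _)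
  have hpath : a :: l'.concat b = l₀ ++ [c, b] := by
    rw [List.concat_eq_append, ← List.cons_append, hc, List.concat_eq_append, List.append_assoc]
    rfl
  rw [hpath] at hchain hnodup
  refine ⟨l₀, c, ?_, by rw [← hpath]; rfl, hchain, hnodup⟩
  exact List.isChain_pair.1 (hchain.suffix (List.suffix_append _ _))

end Relation.ReflTransGen

namespace OutBranching

theorem reaches_delEdge_of_not_isCutEdge {V : Type} {E : V → V → Prop} {r x v : V} (hE : E x v)
    (h : ¬ IsCutEdge E r x v) (w : V) : Reaches (delEdge E x v) r w :=
  not_not.1 fun hw => h ⟨hE, w, hw⟩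

theorem two_paths_distinct_last_edges_general {V : Type} (E : V → V → Prop) (r : V)
    (hconn : Connected E r) (u : V) (hu : u ≠ r)
    (hnothead : ∀ x, ¬ IsCutEdge E r x u) :
    ∃ (l₁ l₂ : List V) (a₁ a₂ : V), a₁ ≠ a₂ ∧
      (l₁ ++ [a₁, u]).head? = some r ∧ List.Chain' E (l₁ ++ [a₁, u]) ∧
        (l₁ ++ [a₁, u]).Nodup ∧
      (l₂ ++ [a₂, u]).head? = some r ∧ List.Chain' E (l₂ ++ [a₂, u]) ∧
        (l₂ ++ [a₂, u]).Nodup := by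
  obtain ⟨l₁, a₁, ha₁, hhead₁, hchain₁, hnodup₁⟩ :=
    Relation.ReflTransGen.exists_nodup_isChain_last_edge (hconn u) hu.symm
  obtain ⟨l₂, a₂, ha₂, hhead₂, hchain₂, hnodup₂⟩ :=
    Relation.ReflTransGen.exists_nodup_isChain_last_edge
      (reaches_delEdge_of_not_isCutEdge ha₁ (hnothead a₁) u) hu.symm
  exact ⟨l₁, l₂, a₁, a₂, fun h => ha₂.2 ⟨h.symm, rfl⟩, hhead₁, hchain₁, hnodup₁,
    hhead₂, hchain₂.imp fun _ _ => And.left, hnodup₂⟩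

/-- In a connected rooted digraph, every vertex `u ≠ r` that is not the
head of any cut-edge is the endpoint of two simple directed paths from `r` that end with
distinct final edges `(a₁,u)` and `(a₂,u)`. -/
theorem two_paths_distinct_last_edges {V : Type} [Fintype V] (E : V → V → Prop) (r : V)
    (hroot : ∀ u, ¬ E u r) (hconn : Connected E r) (u : V) (hu : u ≠ r)
    (hnothead : ∀ x, ¬ IsCutEdge E r x u) :
    ∃ (l₁ l₂ : List V) (a₁ a₂ : V), a₁ ≠ a₂ ∧
      (l₁ ++ [a₁, u]).head? = some r ∧ List.Chain' E (l₁ ++ [a₁, u]) ∧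
        (l₁ ++ [a₁, u]).Nodup ∧
      (l₂ ++ [a₂, u]).head? = some r ∧ List.Chain' E (l₂ ++ [a₂, u]) ∧
        (l₂ ++ [a₂, u]).Nodup :=
  two_paths_distinct_last_edges_general E r hconn u hu hnothead

end OutBranching
end

section
/- Let D be a connected rooted digraph with a cut-edge (u,v) such that (v,u) ∈ E(D), and let D' be the digraph obtained from D by deleting the edge (v,u). Then a subdigraph T is an outbranching of D with at least k leaves if and only if T is an outbranching of D' with at least k leaves; in particular maxleaf(D) = maxleaf(D'). -/
namespace OutBranching

variable {V : Type}

/-! An outbranching `T` of `D` cannot contain `(v,u)`: otherwise `v` is the only in-neighbour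
of `u` in `T`, so every path of `T` from `r` that enters `u` has visited `v` already, and the
edge `(u,v)` is never needed to reach anything. Then `T`, and with it `D`, would stay connected
after deleting `(u,v)`, which is not the case for a cut-edge. So `D` and `D - (v,u)` have the
same outbranchings. -/

theorem Reaches.delEdge_of_inN_subset {R : V → V → Prop} {r u v x : V} (hur : u ≠ r)
    (hin : inN R u ⊆ {v}) (hx : Reaches R r x) : Reaches (delEdge R u v) r x := by
  induction hx with
  | refl => exact Relation.ReflTransGen.refl
  | @tail b c _ hbc ih =>
    by_cases hdel : b = u ∧ c = v
    · obtain ⟨rfl, rfl⟩ := hdel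
      rcases ih.cases_tail with hbr | ⟨z, hz, hzb⟩
      · exact absurd hbr hur
      · obtain rfl : z = c := hin hzb.1
        exact hz
    · exact ih.tail ⟨hbc, hdel⟩

theorem IsOutbranching.not_rel_of_isCutEdge {E T : V → V → Prop} {r u v : V}
    (hT : IsOutbranching E r T) (hcut : IsCutEdge E r u v) : ¬ T v u := by
  intro hvu
  have hur : u ≠ r := fun h => hT.rootIndeg v (h ▸ hvu)
  have hin : inN T u ⊆ {v} := fun z hz => (hT.indeg u hur).unique hz hvu
  obtain ⟨-, w, hw⟩ := hcut
  exact hw <| Relation.ReflTransGen.mono (p := delEdge E u v) (fun _ _ h => ⟨hT.sub h.1, h.2⟩)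
    r w ((hT.reach w).delEdge_of_inN_subset hur hin)

theorem isOutbranching_delEdge_iff {E T : V → V → Prop} {r a b : V} :
    IsOutbranching (delEdge E a b) r T ↔ IsOutbranching E r T ∧ ¬ T a b := by
  constructor
  · intro hT
    exact ⟨⟨fun _ _ h => (hT.sub h).1, hT.reach, hT.indeg, hT.rootIndeg⟩,
      fun hab => (hT.sub hab).2 ⟨rfl, rfl⟩⟩
  · rintro ⟨hT, hab⟩
    refine ⟨fun x y h => ⟨hT.sub h, ?_⟩, hT.reach, hT.indeg, hT.rootIndeg⟩
    rintro ⟨rfl, rfl⟩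
    exact hab h

theorem maxleaf_congr {E E' : V → V → Prop} {r : V}
    (h : ∀ T, IsOutbranching E r T ↔ IsOutbranching E' r T) : maxleaf E r = maxleaf E' r := by
  simp only [maxleaf, h]

theorem delete_reverse_of_cut_edge_general {V : Type} (E : V → V → Prop) (r u v : V)
    (hcut : IsCutEdge E r u v) :
    (∀ (k : ℕ) (T : V → V → Prop),
        (IsOutbranching E r T ∧ k ≤ leafCount T) ↔
          (IsOutbranching (delEdge E v u) r T ∧ k ≤ leafCount T)) ∧
      maxleaf E r = maxleaf (delEdge E v u) r := by
  have hsame : ∀ T, IsOutbranching E r T ↔ IsOutbranching (delEdge E v u) r T := fun T => by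
    rw [isOutbranching_delEdge_iff]
    exact ⟨fun hT => ⟨hT, hT.not_rel_of_isCutEdge hcut⟩, And.left⟩
  exact ⟨fun k T => by rw [hsame T], maxleaf_congr hsame⟩

/-- If `(u,v)` is a cut-edge and `(v,u) ∈ E(D)`, then deleting `(v,u)`
preserves outbranchings with at least `k` leaves (in both directions); in particular
`maxleaf(D) = maxleaf(D')`. -/
theorem delete_reverse_of_cut_edge {V : Type} [Fintype V] (E : V → V → Prop) (r u v : V)
    (hroot : ∀ w, ¬ E w r) (hconn : Connected E r)
    (hcut : IsCutEdge E r u v) (hvu : E v u) :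
    (∀ (k : ℕ) (T : V → V → Prop),
        (IsOutbranching E r T ∧ k ≤ leafCount T) ↔
          (IsOutbranching (delEdge E v u) r T ∧ k ≤ leafCount T)) ∧
      maxleaf E r = maxleaf (delEdge E v u) r :=
  delete_reverse_of_cut_edge_general E r u v hcut

end OutBranching
end

section
/- Let D be a connected rooted digraph containing two cut-edges (x_1,y_1) and (x_2,y_2) such that both (x_1,x_2) and (x_2,x_1) are edges of D, and let D' be the rooted digraph obtained from D by contracting the edge (x_1,x_2). Then maxleaf(D) = maxleaf(D'); in particular, for every integer k, D has an outbranching with at least k leaves if and only if D' does. -/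
/-!
Every outbranching contains every cut-edge, so `x₁` and `x₂` are never leaves. Given an
outbranching of `D`, make one of `x₁`, `x₂` the child of the other (choosing the one that is not an
ancestor of the other, so that no cycle arises); as the new parent was not a leaf, no leaf is lost,
and contracting the tree edge now joining them loses none either. Conversely, in an outbranching of
`D'` the contracted vertex is entered through one of `x₁`, `x₂`, which becomes the parent of the
other, so every leaf of `D'` lifts to a leaf of `D`.
-/

namespace OutBranching

variable {V : Type}

instance (C : V → V → Prop) [Finite V] : Finite (CVert C) := Quotient.finite _

section Outbranching

variable {E T : V → V → Prop} {r : V}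

theorem IsOutbranching.parent_unique (hT : IsOutbranching E r T) {u w v : V} (hu : T u v)
    (hw : T w v) : u = w := by
  have hv : v ≠ r := by
    rintro rfl
    exact hT.rootIndeg u hu
  exact (hT.indeg v hv).unique hu hw

theorem IsOutbranching.not_transGen_self (hT : IsOutbranching E r T) (v : V) :
    ¬ Relation.TransGen T v v := by
  induction hT.reach v with
  | refl =>
    intro h
    obtain ⟨u, -, hu⟩ := Relation.TransGen.tail'_iff.mp h
    exact hT.rootIndeg u hu
  | @tail u v _ huv ih =>
    intro h
    obtain ⟨w, hvw, hwv⟩ := Relation.TransGen.tail'_iff.mp h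
    exact ih (.head' huv (hT.parent_unique hwv huv ▸ hvw))

theorem IsOutbranching.eq_of_reaches_of_reaches (hT : IsOutbranching E r T) {a b : V}
    (hab : Reaches T a b) (hba : Reaches T b a) : a = b := by
  by_contra hne
  rcases Relation.reflTransGen_iff_eq_or_transGen.mp hab with h | h
  · exact hne h.symm
  · exact hT.not_transGen_self a (h.trans_left hba)

theorem IsCutEdge.mem_outbranching {u v : V} (h : IsCutEdge E r u v)
    (hT : IsOutbranching E r T) : T u v := by
  by_contra huv
  obtain ⟨-, w, hw⟩ := h
  exact hw (Relation.ReflTransGen.mono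
    (fun a b hab => ⟨hT.sub hab, fun ⟨ha, hb⟩ => huv (ha ▸ hb ▸ hab)⟩) _ _ (hT.reach w))

theorem maxleaf_le_maxleaf {W : Type} [Finite W] {F : W → W → Prop} {s : W}
    (h : ∀ T, IsOutbranching E r T → ∃ T', IsOutbranching F s T' ∧ leafCount T ≤ leafCount T') :
    maxleaf E r ≤ maxleaf F s := by
  have hbdd : BddAbove {n | ∃ T', IsOutbranching F s T' ∧ leafCount T' = n} :=
    ⟨Nat.card W, by rintro _ ⟨T', -, rfl⟩; exact Set.ncard_le_card _⟩
  refine csSup_le' ?_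
  rintro _ ⟨T, hT, rfl⟩
  obtain ⟨T', hT', hle⟩ := h T hT
  exact hle.trans (le_csSup hbdd ⟨T', hT', rfl⟩)

theorem maxleaf_eq_and_exists_iff {W : Type} [Finite V] [Finite W] {F : W → W → Prop} {s : W}
    (h₁ : ∀ T, IsOutbranching E r T → ∃ T', IsOutbranching F s T' ∧ leafCount T ≤ leafCount T')
    (h₂ : ∀ T', IsOutbranching F s T' → ∃ T, IsOutbranching E r T ∧ leafCount T' ≤ leafCount T) :
    maxleaf E r = maxleaf F s ∧ ∀ k : ℕ,
      ((∃ T, IsOutbranching E r T ∧ k ≤ leafCount T) ↔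
        (∃ T', IsOutbranching F s T' ∧ k ≤ leafCount T')) := by
  refine ⟨(maxleaf_le_maxleaf h₁).antisymm (maxleaf_le_maxleaf h₂), fun k => ⟨?_, ?_⟩⟩
  · rintro ⟨T, hT, hk⟩
    obtain ⟨T', hT', hle⟩ := h₁ T hT
    exact ⟨T', hT', hk.trans hle⟩
  · rintro ⟨T', hT', hk⟩
    obtain ⟨T, hT, hle⟩ := h₂ T' hT'
    exact ⟨T, hT, hk.trans hle⟩

end Outbranching

section Reparent

variable {E T : V → V → Prop} {r : V}

def reparent (T : V → V → Prop) (a b : V) : V → V → Prop :=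
  fun u v => (v = b ∧ u = a) ∨ (v ≠ b ∧ T u v)

theorem isOutbranching_reparent (hT : IsOutbranching E r T) {a b : V} (hab : E a b)
    (hbr : b ≠ r) (hba : ¬ Reaches T b a) : IsOutbranching E r (reparent T a b) where
  sub := by
    rintro u v (⟨rfl, rfl⟩ | ⟨-, h⟩)
    exacts [hab, hT.sub h]
  reach := by
    have avoid : ∀ w, Reaches T r w → ¬ Reaches T b w → Reaches (reparent T a b) r w := by
      intro w hw
      induction hw with
      | refl => exact fun _ => .refl
      | @tail p q _ hpq ih =>
        intro hbq
        have hq : q ≠ b := by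
          rintro rfl
          exact hbq .refl
        exact (ih fun hbp => hbq (hbp.tail hpq)).tail (Or.inr ⟨hq, hpq⟩)
    intro v
    induction hT.reach v with
    | refl => exact .refl
    | @tail p q _ hpq ih =>
      by_cases hq : q = b
      · exact hq ▸ (avoid a (hT.reach a) hba).tail (Or.inl ⟨rfl, rfl⟩)
      · exact ih.tail (Or.inr ⟨hq, hpq⟩)
  indeg v hv := by
    by_cases hvb : v = b
    · refine ⟨a, Or.inl ⟨hvb, rfl⟩, ?_⟩
      rintro u (⟨-, rfl⟩ | ⟨h, -⟩)
      exacts [rfl, absurd hvb h]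
    · obtain ⟨u, hu, huniq⟩ := hT.indeg v hv
      refine ⟨u, Or.inr ⟨hvb, hu⟩, ?_⟩
      rintro w (⟨h, -⟩ | ⟨-, hw⟩)
      exacts [absurd h hvb, huniq w hw]
  rootIndeg u := by
    rintro (⟨h, -⟩ | ⟨-, h⟩)
    exacts [hbr h.symm, hT.rootIndeg u h]

theorem leafCount_le_leafCount_reparent [Finite V] {a : V} (ha : ∃ c, T a c) (b : V) :
    leafCount T ≤ leafCount (reparent T a b) := by
  refine Set.ncard_le_ncard fun v hv w hvw => ?_
  rcases hvw with ⟨-, rfl⟩ | ⟨-, h⟩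
  · obtain ⟨c, hc⟩ := ha
    exact hv c hc
  · exact hv w h

theorem IsOutbranching.exists_adj_of_two_cycle [Finite V] (hT : IsOutbranching E r T)
    {a b : V} (hab : E a b) (hba : E b a) (har : a ≠ r) (hbr : b ≠ r)
    (ha : ∃ c, T a c) (hb : ∃ c, T b c) :
    ∃ T₀, IsOutbranching E r T₀ ∧ leafCount T ≤ leafCount T₀ ∧ (a = b ∨ T₀ a b ∨ T₀ b a) := by
  rcases eq_or_ne a b with rfl | hne
  · exact ⟨T, hT, le_rfl, Or.inl rfl⟩
  by_cases hreach : Reaches T b a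
  · have hab' : ¬ Reaches T a b := fun h => hne (hT.eq_of_reaches_of_reaches h hreach)
    exact ⟨_, isOutbranching_reparent hT hba har hab', leafCount_le_leafCount_reparent hb a,
      Or.inr (Or.inr (Or.inl ⟨rfl, rfl⟩))⟩
  · exact ⟨_, isOutbranching_reparent hT hab hbr hreach, leafCount_le_leafCount_reparent ha b,
      Or.inr (Or.inl (Or.inl ⟨rfl, rfl⟩))⟩

end Reparent

section Contract

variable {E T : V → V → Prop} {r : V} {C : V → V → Prop}

theorem cmk_surjective : Function.Surjective (cmk C) := Quotient.exists_rep

theorem reaches_contractE {u v : V} (h : Reaches T u v) :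
    Reaches (contractE T C) (cmk C u) (cmk C v) := by
  refine Relation.ReflTransGen.lift' (cmk C) (fun p q hpq => ?_) _ _ h
  show Reaches (contractE T C) (cmk C p) (cmk C q)
  by_cases hpq' : cmk C p = cmk C q
  · exact hpq' ▸ .refl
  · exact .single ⟨hpq', p, q, rfl, rfl, hpq⟩

theorem IsOutbranching.contract (hT : IsOutbranching E r T)
    (hstar : ∀ v, ∃ s, cmk C s = cmk C v ∧ ∀ w, cmk C w = cmk C v → w ≠ s → T s w)
    (hr : ∀ v, cmk C v = cmk C r → v = r) :
    IsOutbranching (contractE E C) (cmk C r) (contractE T C) where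
  sub := fun _ _ ⟨hpq, u, v, hu, hv, huv⟩ => ⟨hpq, u, v, hu, hv, hT.sub huv⟩
  reach q := by
    obtain ⟨v, rfl⟩ := cmk_surjective q
    exact reaches_contractE (hT.reach v)
  indeg q hq := by
    obtain ⟨v, rfl⟩ := cmk_surjective q
    obtain ⟨s, hs, htop⟩ := hstar v
    have hsr : s ≠ r := by
      rintro rfl
      exact hq hs.symm
    obtain ⟨p, hp, -⟩ := hT.indeg s hsr
    have hps : cmk C p ≠ cmk C v := by
      intro h
      have hne : p ≠ s := by
        rintro rfl
        exact hT.not_transGen_self p (.single hp)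
      exact hT.not_transGen_self s (.head (htop p h hne) (.single hp))
    refine ⟨cmk C p, ⟨hps, p, s, rfl, hs, hp⟩, ?_⟩
    rintro _ ⟨hne, u, w, rfl, hw, huw⟩
    by_cases hws : w = s
    · rw [hT.parent_unique huw (hws ▸ hp)]
    · rw [hT.parent_unique huw (htop w hw hws)] at hne
      exact absurd hs hne
  rootIndeg p := by
    rintro ⟨-, u, v, -, hv, huv⟩
    exact hT.rootIndeg u (hr v hv ▸ huv)

theorem leafCount_le_leafCount_contractE [Finite V]
    (hleaf : ∀ u v, cmk C u = cmk C v → u ≠ v → ∃ c, T u c) :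
    leafCount T ≤ leafCount (contractE T C) := by
  have hsingle : ∀ v, (∀ w, ¬ T v w) → ∀ u, cmk C v = cmk C u → v = u := by
    intro v hv u h
    by_contra hne
    obtain ⟨c, hc⟩ := hleaf v u h hne
    exact hv c hc
  refine Set.ncard_le_ncard_of_injOn (cmk C) ?_ (fun v hv u _ h => hsingle v hv u h)
  rintro v hv _ ⟨-, u, w, hu, -, huw⟩
  exact hv w (hsingle v hv u hu.symm ▸ huw)

end Contract

section Lift

variable {E : V → V → Prop} {r : V} {C : V → V → Prop}

open Classical in
/-- Lifting an outbranching of the contraction: `src q → entry q` is an edge of `E` lifting the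
parent edge of the class `q`; `entry q` becomes the parent of the other members of `q`. -/
def liftRel (r : V) (src entry : CVert C → V) : V → V → Prop :=
  fun m n => n ≠ r ∧ m = if n = entry (cmk C n) then src (cmk C n) else entry (cmk C n)

variable {T' : CVert C → CVert C → Prop} {src entry : CVert C → V}

theorem isOutbranching_liftRel (hT' : IsOutbranching (contractE E C) (cmk C r) T')
    (hclique : ∀ u v, cmk C u = cmk C v → u ≠ v → E u v) (hr : ∀ v, cmk C v = cmk C r → v = r)
    (hsrc : ∀ q, q ≠ cmk C r → T' (cmk C (src q)) q)
    (hentry : ∀ q, q ≠ cmk C r → cmk C (entry q) = q)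
    (hE : ∀ q, q ≠ cmk C r → E (src q) (entry q)) :
    IsOutbranching E r (liftRel r src entry) where
  sub := by
    rintro m n ⟨hn, rfl⟩
    have hq : cmk C n ≠ cmk C r := fun h => hn (hr n h)
    split_ifs with h
    · have := hE _ hq
      rwa [← h] at this
    · exact hclique _ _ (hentry _ hq) (Ne.symm h)
  reach := by
    have key : ∀ q, Reaches T' (cmk C r) q → ∀ n, cmk C n = q →
        Reaches (liftRel r src entry) r n := by
      intro q hq
      induction hq with
      | refl =>
        intro n hn
        rw [hr n hn]
        exact .refl
      | @tail p q _ hpq ih =>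
        intro n hn
        have hq : q ≠ cmk C r := fun h => hT'.rootIndeg p (h ▸ hpq)
        have hne : ∀ v, cmk C v = q → v ≠ r := by
          rintro v hv rfl
          exact hq hv.symm
        have hreach : Reaches (liftRel r src entry) r (entry q) :=
          (ih _ (hT'.parent_unique (hsrc q hq) hpq)).tail
            ⟨hne _ (hentry q hq), by simp [hentry q hq]⟩
        by_cases h : n = entry q
        · exact h ▸ hreach
        · exact hreach.tail ⟨hne n hn, by simp [hn, h]⟩
    exact fun n => key _ (hT'.reach _) n rfl
  indeg n hn := ⟨_, ⟨hn, rfl⟩, fun _ hm => hm.2⟩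
  rootIndeg _ h := h.1 rfl

theorem leafCount_le_leafCount_liftRel [Finite V] (hr : ∀ v, cmk C v = cmk C r → v = r)
    (hsrc : ∀ q, q ≠ cmk C r → T' (cmk C (src q)) q)
    (hentry : ∀ q, q ≠ cmk C r → cmk C (entry q) = q) :
    leafCount T' ≤ leafCount (liftRel r src entry) := by
  have hsub : {q | ∀ p, ¬ T' q p} ⊆ cmk C '' {n | ∀ m, ¬ liftRel r src entry n m} := by
    intro q hq
    -- a leaf of the class `q`: any member other than `entry q`, if there is one
    obtain ⟨n, hn, hleaf⟩ :
        ∃ n, cmk C n = q ∧ (n ≠ entry q ∨ ∀ m, cmk C m = q → m = entry q) := by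
      by_cases h : ∃ n, cmk C n = q ∧ n ≠ entry q
      · obtain ⟨n, hn, hne⟩ := h
        exact ⟨n, hn, .inl hne⟩
      · push Not at h
        obtain ⟨n, hn⟩ := cmk_surjective q
        exact ⟨n, hn, .inr h⟩
    refine ⟨n, fun m ⟨hmr, hnm⟩ => ?_, hn⟩
    have hm : cmk C m ≠ cmk C r := fun h => hmr (hr m h)
    split_ifs at hnm with hme
    · exact hq _ (hn ▸ hnm ▸ hsrc _ hm)
    · have hmq : cmk C m = q := by rw [← hn, hnm, hentry _ hm]
      rw [hmq] at hnm hme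
      rcases hleaf with hne | hall
      · exact hne hnm
      · exact hme (hall m hmq)
  exact (Set.ncard_le_ncard hsub).trans Set.ncard_image_le

theorem IsOutbranching.exists_lift [Finite V] (hT' : IsOutbranching (contractE E C) (cmk C r) T')
    (hclique : ∀ u v, cmk C u = cmk C v → u ≠ v → E u v) (hr : ∀ v, cmk C v = cmk C r → v = r) :
    ∃ T, IsOutbranching E r T ∧ leafCount T' ≤ leafCount T := by
  have hlift : ∀ q, q ≠ cmk C r → ∃ u v, T' (cmk C u) q ∧ cmk C v = q ∧ E u v := by
    intro q hq
    obtain ⟨p, hp, -⟩ := hT'.indeg q hq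
    obtain ⟨-, u, v, rfl, rfl, huv⟩ := hT'.sub hp
    exact ⟨u, v, hp, rfl, huv⟩
  have : Nonempty V := ⟨r⟩
  choose! src entry hsrc hentry hE using hlift
  exact ⟨_, isOutbranching_liftRel hT' hclique hr hsrc hentry hE,
    leafCount_le_leafCount_liftRel hr hsrc hentry⟩

end Lift

section SingleEdge

variable {a b : V}

theorem cmk_singleEdge_eq_iff {u v : V} :
    cmk (singleEdge a b) u = cmk (singleEdge a b) v ↔
      u = v ∨ ((u = a ∨ u = b) ∧ (v = a ∨ v = b)) := by
  constructor
  · intro h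
    replace h : Relation.EqvGen (singleEdge a b) u v := Quotient.exact h
    induction h with
    | rel u v h => exact .inr ⟨.inl h.1, .inr h.2⟩
    | refl => exact .inl rfl
    | symm u v _ ih => tauto
    | trans u v w _ _ ih₁ ih₂ =>
      rcases ih₁ with rfl | ih₁
      · exact ih₂
      · rcases ih₂ with rfl | ih₂ <;> tauto
  · have hab : cmk (singleEdge a b) a = cmk (singleEdge a b) b :=
      Quotient.sound (.rel _ _ ⟨rfl, rfl⟩)
    rintro (rfl | ⟨rfl | rfl, rfl | rfl⟩)
    exacts [rfl, rfl, hab, hab.symm, rfl]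

theorem mem_pair_of_cmk_singleEdge_eq {u v : V}
    (h : cmk (singleEdge a b) u = cmk (singleEdge a b) v) (huv : u ≠ v) :
    (u = a ∨ u = b) ∧ (v = a ∨ v = b) :=
  (cmk_singleEdge_eq_iff.mp h).resolve_left huv

theorem eq_of_cmk_singleEdge_eq {r v : V} (ha : a ≠ r) (hb : b ≠ r)
    (h : cmk (singleEdge a b) v = cmk (singleEdge a b) r) : v = r := by
  by_contra hv
  rcases (mem_pair_of_cmk_singleEdge_eq h hv).2 with h | h
  exacts [ha h.symm, hb h.symm]

theorem adj_of_cmk_singleEdge_eq {E : V → V → Prop} (hab : E a b) (hba : E b a) {u v : V}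
    (h : cmk (singleEdge a b) u = cmk (singleEdge a b) v) (huv : u ≠ v) : E u v := by
  rcases mem_pair_of_cmk_singleEdge_eq h huv with ⟨rfl | rfl, rfl | rfl⟩
  exacts [absurd rfl huv, hab, hba, absurd rfl huv]

theorem exists_star_singleEdge {T : V → V → Prop} (h : a = b ∨ T a b ∨ T b a) (v : V) :
    ∃ s, cmk (singleEdge a b) s = cmk (singleEdge a b) v ∧
      ∀ w, cmk (singleEdge a b) w = cmk (singleEdge a b) v → w ≠ s → T s w := by
  simp only [cmk_singleEdge_eq_iff]
  by_cases hv : v = a ∨ v = b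
  · by_cases hba : T b a
    · exact ⟨b, by tauto, by grind⟩
    · exact ⟨a, by tauto, by grind⟩
  · exact ⟨v, .inl rfl, by tauto⟩

end SingleEdge

theorem contract_edge_between_cut_tails_general {V : Type} [Fintype V] (E : V → V → Prop)
    (r x₁ y₁ x₂ y₂ : V) (hroot : ∀ w, ¬ E w r)
    (h₁ : IsCutEdge E r x₁ y₁) (h₂ : IsCutEdge E r x₂ y₂)
    (e₁₂ : E x₁ x₂) (e₂₁ : E x₂ x₁) :
    maxleaf E r = maxleaf (contractE E (singleEdge x₁ x₂)) (cmk (singleEdge x₁ x₂) r) ∧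
      ∀ k : ℕ,
        ((∃ T, IsOutbranching E r T ∧ k ≤ leafCount T) ↔
          (∃ T', IsOutbranching (contractE E (singleEdge x₁ x₂))
              (cmk (singleEdge x₁ x₂) r) T' ∧ k ≤ leafCount T')) := by
  have hx₁ : x₁ ≠ r := by rintro rfl; exact hroot x₂ e₂₁
  have hx₂ : x₂ ≠ r := by rintro rfl; exact hroot x₁ e₁₂
  have hr : ∀ v, cmk (singleEdge x₁ x₂) v = cmk (singleEdge x₁ x₂) r → v = r :=
    fun v => eq_of_cmk_singleEdge_eq hx₁ hx₂
  have hbusy : ∀ {T}, IsOutbranching E r T → ∀ u, u = x₁ ∨ u = x₂ → ∃ c, T u c := by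
    rintro T hT u (rfl | rfl)
    exacts [⟨y₁, h₁.mem_outbranching hT⟩, ⟨y₂, h₂.mem_outbranching hT⟩]
  refine maxleaf_eq_and_exists_iff (fun T hT => ?_)
    (fun T' hT' => hT'.exists_lift (fun u v => adj_of_cmk_singleEdge_eq e₁₂ e₂₁) hr)
  obtain ⟨T₀, hT₀, hle, hadj⟩ := hT.exists_adj_of_two_cycle e₁₂ e₂₁ hx₁ hx₂
    (hbusy hT x₁ (.inl rfl)) (hbusy hT x₂ (.inr rfl))
  exact ⟨_, hT₀.contract (exists_star_singleEdge hadj) hr, hle.trans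
    (leafCount_le_leafCount_contractE fun u v h huv =>
      hbusy hT₀ u (mem_pair_of_cmk_singleEdge_eq h huv).1)⟩

/-- If `(x₁,y₁)` and `(x₂,y₂)` are cut-edges with both `(x₁,x₂)` and
`(x₂,x₁)` edges of `D`, and `D'` is obtained by contracting `(x₁,x₂)`, then
`maxleaf(D) = maxleaf(D')`; in particular, for every `k`, `D` has an outbranching with
at least `k` leaves iff `D'` does. -/
theorem contract_edge_between_cut_tails {V : Type} [Fintype V] (E : V → V → Prop)
    (r x₁ y₁ x₂ y₂ : V) (hroot : ∀ w, ¬ E w r) (hconn : Connected E r)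
    (h₁ : IsCutEdge E r x₁ y₁) (h₂ : IsCutEdge E r x₂ y₂)
    (e₁₂ : E x₁ x₂) (e₂₁ : E x₂ x₁) :
    maxleaf E r = maxleaf (contractE E (singleEdge x₁ x₂)) (cmk (singleEdge x₁ x₂) r) ∧
      ∀ k : ℕ,
        ((∃ T, IsOutbranching E r T ∧ k ≤ leafCount T) ↔
          (∃ T', IsOutbranching (contractE E (singleEdge x₁ x₂))
              (cmk (singleEdge x₁ x₂) r) T' ∧ k ≤ leafCount T')) :=
  contract_edge_between_cut_tails_general E r x₁ y₁ x₂ y₂ hroot h₁ h₂ e₁₂ e₂₁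

end OutBranching
end

section
/- Let G = (X,Y,E) be a bipartite undirected graph with parts X and Y that is d-degenerate. Then the sum of deg_G(y) over all vertices y ∈ Y with deg_G(y) > 2d is at most 2d·|X|. -/
namespace SimpleGraph

open Finset

variable {V : Type*} (G : SimpleGraph V)

/-- `Set.ncard` is `0` on infinite sets, so this is the usual notion only for locally finite
graphs. -/
def IsDegenerate (d : ℕ) : Prop :=
  ∀ s : Set V, s.Nonempty → ∃ v ∈ s, {u ∈ s | G.Adj v u}.ncard ≤ d

variable [DecidableRel G.Adj]

theorem sum_card_filter_adj_insert [DecidableEq V] {v : V} {t : Finset V} (hv : v ∉ t) :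
    ∑ u ∈ insert v t, #{w ∈ insert v t | G.Adj u w} =
      ∑ u ∈ t, #{w ∈ t | G.Adj u w} + 2 * #{w ∈ t | G.Adj v w} := by
  have hself : #{w ∈ insert v t | G.Adj v w} = #{w ∈ t | G.Adj v w} := by
    rw [filter_insert, if_neg G.irrefl]
  have hother (u : V) : #{w ∈ insert v t | G.Adj u w} =
      #{w ∈ t | G.Adj u w} + if G.Adj v u then 1 else 0 := by
    rw [filter_insert]
    by_cases h : G.Adj u v
    · rw [if_pos h, if_pos h.symm, card_insert_of_notMem fun h' => hv (mem_filter.mp h').1]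
    · rw [if_neg h, if_neg fun h' => h h'.symm, add_zero]
  rw [sum_insert hv, hself, sum_congr rfl fun u _ => hother u, sum_add_distrib, ← card_filter]
  ring

theorem ncard_neighborSet_eq_degree [Fintype V] (v : V) :
    (G.neighborSet v).ncard = G.degree v := by
  rw [← Nat.card_coe_set_eq, Nat.card_eq_fintype_card, card_neighborSet_eq_degree]

variable {G}

theorem IsDegenerate.sum_card_filter_adj_le {d : ℕ} (hG : G.IsDegenerate d) (s : Finset V) :
    ∑ u ∈ s, #{w ∈ s | G.Adj u w} ≤ 2 * d * #s := by
  classical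
  induction s using Finset.strongInduction with
  | H s ih =>
  obtain rfl | hs := s.eq_empty_or_nonempty
  · simp
  -- removing a vertex of degree at most `d` in `s` lowers the sum by at most `2d`
  obtain ⟨v, hv, hvd⟩ := hG s (by simpa using hs)
  have hv : v ∈ s := hv
  have hdeg : #{w ∈ s.erase v | G.Adj v w} ≤ d := by
    refine le_trans (card_le_card (filter_subset_filter _ (erase_subset v s))) ?_
    simpa [← coe_filter] using hvd
  have hrest := ih (s.erase v) (erase_ssubset hv)
  rw [← insert_erase hv, sum_card_filter_adj_insert G (notMem_erase v s),
    card_insert_of_notMem (notMem_erase v s)]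
  linarith

theorem IsDegenerate.sum_degree_le [Fintype V] {d : ℕ} (hG : G.IsDegenerate d)
    {A B : Finset V} (hAB : Disjoint A B) (hB : ∀ b ∈ B, ∀ u, G.Adj b u → u ∈ A) :
    ∑ b ∈ B, G.degree b ≤ d * (#A + #B) := by
  classical
  have hdeg {b : V} (hb : b ∈ B) {s : Finset V} (hs : A ⊆ s) :
      #{w ∈ s | G.Adj b w} = G.degree b := by
    rw [← card_neighborFinset_eq_degree]
    congr 1
    ext w
    simpa using fun h => hs (hB b hb w h)
  have hcross : ∑ b ∈ B, G.degree b ≤ ∑ a ∈ A, #{w ∈ A ∪ B | G.Adj a w} :=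
    calc ∑ b ∈ B, G.degree b = ∑ b ∈ B, #{a ∈ A | G.Adj b a} :=
          sum_congr rfl fun b hb => (hdeg hb subset_rfl).symm
      _ = ∑ a ∈ A, #{b ∈ B | G.Adj b a} := sum_card_bipartiteAbove_eq_sum_card_bipartiteBelow _
      _ ≤ ∑ a ∈ A, #{w ∈ A ∪ B | G.Adj a w} := sum_le_sum fun a _ => by
          simp_rw [G.adj_comm _ a]
          exact card_le_card (filter_subset_filter _ subset_union_right)
  have htotal := hG.sum_card_filter_adj_le (A ∪ B)
  rw [sum_union hAB, sum_congr rfl fun b hb => hdeg hb subset_union_left,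
    card_union_of_disjoint hAB] at htotal
  linarith

theorem IsDegenerate.sum_degree_le_of_lt_degree [Fintype V] {d : ℕ} (hG : G.IsDegenerate d)
    {A B : Finset V} (hAB : Disjoint A B) (hB : ∀ b ∈ B, ∀ u, G.Adj b u → u ∈ A)
    (hbig : ∀ b ∈ B, 2 * d < G.degree b) :
    ∑ b ∈ B, G.degree b ≤ 2 * d * #A := by
  have hle := hG.sum_degree_le hAB hB
  have hlarge : (2 * d + 1) * #B ≤ ∑ b ∈ B, G.degree b := by
    simpa [mul_comm] using card_nsmul_le_sum B _ (2 * d + 1) hbig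
  nlinarith

end SimpleGraph

namespace OutBranching

theorem bipartite_degenerate_big_degrees_general {V : Type} [Fintype V] (G : SimpleGraph V)
    (X Y : Set V) (d : ℕ)
    (hdisj : Disjoint X Y)
    (hbip : ∀ a b, G.Adj a b → (a ∈ X ∧ b ∈ Y) ∨ (a ∈ Y ∧ b ∈ X))
    (hdegen : ∀ s : Set V, s.Nonempty → ∃ v ∈ s, {u ∈ s | G.Adj v u}.ncard ≤ d) :
    ∑ᶠ y ∈ {y ∈ Y | 2 * d < (G.neighborSet y).ncard}, (G.neighborSet y).ncard
      ≤ 2 * d * X.ncard := by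
  classical
  simp only [G.ncard_neighborSet_eq_degree]
  rw [finsum_mem_eq_toFinset_sum, Set.ncard_eq_toFinset_card']
  refine SimpleGraph.IsDegenerate.sum_degree_le_of_lt_degree hdegen ?_ ?_ ?_
  · exact Set.disjoint_toFinset.mpr (hdisj.mono_right (Set.sep_subset _ _))
  · intro b hb u hbu
    rw [Set.mem_toFinset] at hb ⊢
    exact ((hbip b u hbu).resolve_left fun h => Set.disjoint_left.mp hdisj h.1 hb.1).2
  · exact fun b hb => (Set.mem_toFinset.mp hb).2

/-- In a `d`-degenerate bipartite graph `G = (X,Y,E)`, the sum of the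
degrees of the vertices of `Y` of degree greater than `2d` is at most `2d·|X|`. -/
theorem bipartite_degenerate_big_degrees {V : Type} [Fintype V] (G : SimpleGraph V)
    (X Y : Set V) (d : ℕ)
    (hcover : X ∪ Y = Set.univ) (hdisj : Disjoint X Y)
    (hbip : ∀ a b, G.Adj a b → (a ∈ X ∧ b ∈ Y) ∨ (a ∈ Y ∧ b ∈ X))
    (hdegen : ∀ s : Set V, s.Nonempty → ∃ v ∈ s, {u ∈ s | G.Adj v u}.ncard ≤ d) :
    ∑ᶠ y ∈ {y ∈ Y | 2 * d < (G.neighborSet y).ncard}, (G.neighborSet y).ncard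
      ≤ 2 * d * X.ncard :=
  bipartite_degenerate_big_degrees_general G X Y d hdisj hbip hdegen

end OutBranching
end
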